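/- In the logistic regression model, the function W(s) := F(Ωs) is continuously differentiable on R^d and its gradient satisfies, for every s ∈ R^d, ∇W(s) = −Ω h(s), where h(s) := (1/n) Σ_{i=1}^n ∫_R 𝗌_i(z) p_i(z; Ωs) dz − s. -/

import Mathlib

open Matrix Real
open scoped BigOperators

noncomputable section

/-- `‖X_i‖`, the Euclidean norm of the covariate vector. -/
def nrmX {d : ℕ} (Xi : Fin d → ℝ) : ℝ := Real.sqrt (Xi ⬝ᵥ Xi)

/-- `𝗌_i(z) := z X_i / (‖X_i‖ σ²)`. -/
def sStat {d : ℕ} (Xi : Fin d → ℝ) (σ : ℝ) (z : ℝ) : Fin d → ℝ :=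
  (z / (nrmX Xi * σ ^ 2)) • Xi

/-- `Ω := ((1/(σ²n)) ∑_i X_i X_iᵀ/‖X_i‖² + 2τ I_d)⁻¹`. -/
def OmegaMat (d n : ℕ) (X : Fin n → Fin d → ℝ) (σ τ : ℝ) : Matrix (Fin d) (Fin d) ℝ :=
  ((σ ^ 2 * (n : ℝ))⁻¹ • ∑ i, (X i ⬝ᵥ X i)⁻¹ • vecMulVec (X i) (X i)
      + (2 * τ) • (1 : Matrix (Fin d) (Fin d) ℝ))⁻¹

/-- `R(θ) := (1/2) θᵀ Ω⁻¹ θ`. -/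
def Rpen (d n : ℕ) (X : Fin n → Fin d → ℝ) (σ τ : ℝ) (θ : Fin d → ℝ) : ℝ :=
  (1 / 2) * (θ ⬝ᵥ (OmegaMat d n X σ τ)⁻¹.mulVec θ)

/-- The objective `F`: normalized negative penalized log-likelihood of the logistic
regression model with Gaussian predictors, written with one-dimensional integrals. -/
def Fobj (d n : ℕ) (X : Fin n → Fin d → ℝ) (y : Fin n → ℝ) (σ τ : ℝ) (θ : Fin d → ℝ) : ℝ :=
  -(n : ℝ)⁻¹ * ∑ i, Real.log (∫ z : ℝ,
      (1 + Real.exp (-(y i * nrmX (X i) * z)))⁻¹ * Real.exp (sStat (X i) σ z ⬝ᵥ θ)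
        * Real.exp (-z ^ 2 / (2 * σ ^ 2)))
    + Rpen d n X σ τ θ

/-- The probability density `z ↦ p_i(z; θ)` on `ℝ`, proportional to
`z ↦ (1 + exp(−y_i‖X_i‖z))⁻¹ exp(⟨𝗌_i(z),θ⟩ − z²/(2σ²))`. -/
def pdens (d : ℕ) (Xi : Fin d → ℝ) (σ : ℝ) (yi : ℝ) (θ : Fin d → ℝ) (z : ℝ) : ℝ :=
  ((1 + Real.exp (-(yi * nrmX Xi * z)))⁻¹ * Real.exp (sStat Xi σ z ⬝ᵥ θ - z ^ 2 / (2 * σ ^ 2)))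
    / ∫ z' : ℝ, (1 + Real.exp (-(yi * nrmX Xi * z')))⁻¹
        * Real.exp (sStat Xi σ z' ⬝ᵥ θ - z' ^ 2 / (2 * σ ^ 2))

/-- The EM mean-field map `h(s) := (1/n) ∑_i ∫_ℝ 𝗌_i(z) p_i(z; Ωs) dz − s`. -/
def hEM (d n : ℕ) (X : Fin n → Fin d → ℝ) (y : Fin n → ℝ) (σ τ : ℝ) (s : Fin d → ℝ) :
    Fin d → ℝ :=
  (n : ℝ)⁻¹ • ∑ i, (∫ z : ℝ,
      pdens d (X i) σ (y i) ((OmegaMat d n X σ τ).mulVec s) z • sStat (X i) σ z) - s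

/-!
Each log-integral in `F` is the cumulant generating function of the finite measure with density
`sigmoid (y_i ‖X_i‖ z) e^{-z²/(2σ²)}`, evaluated at the linear form `⟨𝗌_i(1), θ⟩`. Being dominated
by a Gaussian, this measure has exponential moments of all orders, so its cgf is analytic on `ℝ`
and its derivative is the mean of `p_i`. The penalty is the quadratic form of the symmetric matrix
`Ω⁻¹`. Hence `F` is smooth with `∇F(θ) = Ω⁻¹θ − (1/n) ∑_i ∫ 𝗌_i p_i(·; θ)`, and the chain rule
with `Ωᵀ = Ω` and `Ω Ω⁻¹ Ω = Ω` gives `∇W(s) = Ω ∇F(Ωs) = −Ω h(s)`.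
-/

open MeasureTheory ProbabilityTheory

lemma integrable_exp_mul_sub_sq_div {σ : ℝ} (hσ : σ ≠ 0) (t : ℝ) :
    Integrable fun z : ℝ ↦ exp (t * z - z ^ 2 / (2 * σ ^ 2)) := by
  have hb : 0 < (2 * σ ^ 2)⁻¹ := by positivity
  -- complete the square
  have h := ((integrable_exp_neg_mul_sq hb).comp_sub_right (σ ^ 2 * t)).const_mul
    (exp (σ ^ 2 * t ^ 2 / 2))
  refine h.congr (.of_forall fun z ↦ ?_)
  simp only [← exp_add]
  congr 1
  field_simp
  ring

def gaussWeighted (σ : ℝ) (f : ℝ → ℝ) : Measure ℝ :=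
  volume.withDensity fun z ↦ ENNReal.ofReal (f z * exp (-z ^ 2 / (2 * σ ^ 2)))

section GaussWeighted

variable {σ : ℝ} {f : ℝ → ℝ}

lemma integral_gaussWeighted (hf : Measurable f) (hf0 : ∀ z, 0 ≤ f z) (g : ℝ → ℝ) :
    ∫ z, g z ∂gaussWeighted σ f = ∫ z, f z * exp (-z ^ 2 / (2 * σ ^ 2)) * g z := by
  rw [gaussWeighted, integral_withDensity_eq_integral_toReal_smul (by fun_prop)
    (.of_forall fun _ ↦ ENNReal.ofReal_lt_top)]
  congr with z
  rw [ENNReal.toReal_ofReal (mul_nonneg (hf0 z) (exp_pos _).le), smul_eq_mul]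

lemma integrableExpSet_id_gaussWeighted (hσ : σ ≠ 0) (hf : Measurable f) (hf0 : ∀ z, 0 ≤ f z)
    (hf1 : ∀ z, f z ≤ 1) : integrableExpSet id (gaussWeighted σ f) = Set.univ := by
  refine Set.eq_univ_of_forall fun t ↦ ?_
  rw [integrableExpSet, Set.mem_ofPred_eq, gaussWeighted,
    integrable_withDensity_iff_integrable_smul' (by fun_prop)
      (.of_forall fun _ ↦ ENNReal.ofReal_lt_top)]
  refine (integrable_exp_mul_sub_sq_div hσ t).mono' (by fun_prop) (.of_forall fun z ↦ ?_)
  have hfz := hf0 z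
  rw [ENNReal.toReal_ofReal (by positivity), smul_eq_mul, id, Real.norm_of_nonneg (by positivity),
    sub_eq_add_neg, exp_add, ← neg_div]
  calc f z * exp (-z ^ 2 / (2 * σ ^ 2)) * exp (t * z)
      ≤ 1 * exp (-z ^ 2 / (2 * σ ^ 2)) * exp (t * z) := by gcongr; exact hf1 z
    _ = _ := by ring

end GaussWeighted

def logisticGaussMeasure (σ b : ℝ) : Measure ℝ := gaussWeighted σ fun z ↦ sigmoid (b * z)

lemma integrableExpSet_id_logisticGaussMeasure {σ : ℝ} (hσ : σ ≠ 0) (b : ℝ) :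
    integrableExpSet id (logisticGaussMeasure σ b) = Set.univ :=
  integrableExpSet_id_gaussWeighted hσ (by fun_prop) (fun _ ↦ sigmoid_nonneg _)
    (fun _ ↦ sigmoid_le_one _)

lemma mgf_logisticGaussMeasure (σ b t : ℝ) :
    mgf id (logisticGaussMeasure σ b) t
      = ∫ z, sigmoid (b * z) * exp (-z ^ 2 / (2 * σ ^ 2)) * exp (t * z) :=
  integral_gaussWeighted (by fun_prop) (fun _ ↦ sigmoid_nonneg _) _

lemma integral_mul_exp_logisticGaussMeasure (σ b t : ℝ) :
    ∫ z, id z * exp (t * id z) ∂logisticGaussMeasure σ b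
      = ∫ z, sigmoid (b * z) * exp (-z ^ 2 / (2 * σ ^ 2)) * exp (t * z) * z := by
  rw [logisticGaussMeasure, integral_gaussWeighted (by fun_prop) (fun _ ↦ sigmoid_nonneg _)]
  simp only [id]
  congr with z
  ring

lemma sStat_eq_smul {d : ℕ} (Xi : Fin d → ℝ) (σ z : ℝ) : sStat Xi σ z = z • sStat Xi σ 1 := by
  simp only [sStat, smul_smul]
  ring_nf

lemma sStat_dotProduct {d : ℕ} (Xi : Fin d → ℝ) (σ z : ℝ) (θ : Fin d → ℝ) :
    sStat Xi σ z ⬝ᵥ θ = (sStat Xi σ 1 ⬝ᵥ θ) * z := by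
  rw [sStat_eq_smul, smul_dotProduct, smul_eq_mul, mul_comm]

lemma isSymm_OmegaMat (d n : ℕ) (X : Fin n → Fin d → ℝ) (σ τ : ℝ) :
    (OmegaMat d n X σ τ).IsSymm := by
  refine IsSymm.inv (IsSymm.ext fun i j ↦ ?_)
  simp [Matrix.sum_apply, vecMulVec_apply, one_apply, mul_comm, eq_comm]

lemma Matrix.inv_mul_inv_inv_mul_inv {ι α : Type*} [Fintype ι] [DecidableEq ι] [CommRing α]
    (A : Matrix ι ι α) :
    A⁻¹ * A⁻¹⁻¹ * A⁻¹ = A⁻¹ := by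
  by_cases h : IsUnit A.det
  · rw [nonsing_inv_nonsing_inv A h, nonsing_inv_mul A h, one_mul]
  · simp [nonsing_inv_apply_not_isUnit A h]

lemma hasLineDerivAt_dotProduct_mulVec_self {ι : Type*} [Fintype ι] {M : Matrix ι ι ℝ}
    (hM : M.IsSymm) (x v : ι → ℝ) :
    HasLineDerivAt ℝ (fun x ↦ x ⬝ᵥ M *ᵥ x) (2 * (M *ᵥ x ⬝ᵥ v)) x v := by
  have hxv : x ⬝ᵥ M *ᵥ v = M *ᵥ x ⬝ᵥ v := by
    rw [dotProduct_mulVec, ← mulVec_transpose, hM.eq]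
  have hexp : ∀ t : ℝ, (x + t • v) ⬝ᵥ M *ᵥ (x + t • v)
      = x ⬝ᵥ M *ᵥ x + t * (2 * (M *ᵥ x ⬝ᵥ v)) + t ^ 2 * (v ⬝ᵥ M *ᵥ v) := by
    intro t
    simp only [mulVec_add, mulVec_smul, dotProduct_add, add_dotProduct, dotProduct_smul,
      smul_dotProduct, smul_eq_mul, hxv, dotProduct_comm v (M *ᵥ x)]
    ring
  unfold HasLineDerivAt
  simp only [hexp]
  simpa using (((hasDerivAt_id (0 : ℝ)).mul_const (2 * (M *ᵥ x ⬝ᵥ v))).const_add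
    (x ⬝ᵥ M *ᵥ x)).fun_add ((hasDerivAt_pow 2 (0 : ℝ)).mul_const (v ⬝ᵥ M *ᵥ v))

lemma HasDerivAt.hasLineDerivAt_comp_dotProduct {ι : Type*} [Fintype ι] {g : ℝ → ℝ} {g' : ℝ}
    {w x : ι → ℝ} (hg : HasDerivAt g g' (w ⬝ᵥ x)) (v : ι → ℝ) :
    HasLineDerivAt ℝ (fun x ↦ g (w ⬝ᵥ x)) (g' * (w ⬝ᵥ v)) x v := by
  have hline : HasDerivAt (fun t : ℝ ↦ w ⬝ᵥ (x + t • v)) (w ⬝ᵥ v) 0 := by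
    simp only [dotProduct_add, dotProduct_smul, smul_eq_mul]
    simpa using ((hasDerivAt_id (0 : ℝ)).mul_const (w ⬝ᵥ v)).const_add (w ⬝ᵥ x)
  exact hg.comp_of_eq 0 hline (by simp)

lemma contDiff_cgf_logisticGaussMeasure {σ : ℝ} (hσ : σ ≠ 0) (b : ℝ) {k : WithTop ℕ∞} :
    ContDiff ℝ k (cgf id (logisticGaussMeasure σ b)) := by
  apply AnalyticOnNhd.contDiff
  simpa [integrableExpSet_id_logisticGaussMeasure hσ] using
    analyticOnNhd_cgf (X := id) (μ := logisticGaussMeasure σ b)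

lemma hasDerivAt_cgf_logisticGaussMeasure {σ : ℝ} (hσ : σ ≠ 0) (b t : ℝ) :
    HasDerivAt (cgf id (logisticGaussMeasure σ b))
      (deriv (cgf id (logisticGaussMeasure σ b)) t) t :=
  ((contDiff_cgf_logisticGaussMeasure hσ b (k := 1)).differentiable one_ne_zero t).hasDerivAt

lemma log_integral_eq_cgf {d : ℕ} (Xi : Fin d → ℝ) (σ b : ℝ) (θ : Fin d → ℝ) :
    log (∫ z, (1 + exp (-(b * z)))⁻¹ * exp (sStat Xi σ z ⬝ᵥ θ) * exp (-z ^ 2 / (2 * σ ^ 2)))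
      = cgf id (logisticGaussMeasure σ b) (sStat Xi σ 1 ⬝ᵥ θ) := by
  rw [cgf, mgf_logisticGaussMeasure]
  congr with z
  rw [sStat_dotProduct, sigmoid_def]
  ring

lemma integral_pdens_smul_sStat {d : ℕ} (Xi : Fin d → ℝ) {σ : ℝ} (hσ : σ ≠ 0) (yi : ℝ)
    (θ : Fin d → ℝ) :
    ∫ z, pdens d Xi σ yi θ z • sStat Xi σ z
      = deriv (cgf id (logisticGaussMeasure σ (yi * nrmX Xi))) (sStat Xi σ 1 ⬝ᵥ θ)
          • sStat Xi σ 1 := by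
  have hnum : ∀ z, (1 + exp (-(yi * nrmX Xi * z)))⁻¹
      * exp (sStat Xi σ z ⬝ᵥ θ - z ^ 2 / (2 * σ ^ 2))
      = sigmoid (yi * nrmX Xi * z) * exp (-z ^ 2 / (2 * σ ^ 2))
        * exp ((sStat Xi σ 1 ⬝ᵥ θ) * z) := by
    intro z
    rw [sStat_dotProduct, sigmoid_def, mul_assoc _ (exp _), ← exp_add]
    ring_nf
  rw [deriv_cgf (by simp [integrableExpSet_id_logisticGaussMeasure hσ]),
    integral_mul_exp_logisticGaussMeasure, mgf_logisticGaussMeasure, ← integral_div,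
    ← integral_smul_const]
  congr 1
  funext z
  simp only [pdens, hnum]
  rw [sStat_eq_smul Xi σ z, smul_smul]
  ring_nf

lemma Fobj_eq_sum_cgf (d n : ℕ) (X : Fin n → Fin d → ℝ) (y : Fin n → ℝ) (σ τ : ℝ) :
    Fobj d n X y σ τ = fun θ ↦
      -(n : ℝ)⁻¹ * ∑ i, cgf id (logisticGaussMeasure σ (y i * nrmX (X i))) (sStat (X i) σ 1 ⬝ᵥ θ)
        + 1 / 2 * (θ ⬝ᵥ (OmegaMat d n X σ τ)⁻¹ *ᵥ θ) := by
  ext θ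
  simp only [Fobj, Rpen, log_integral_eq_cgf]

lemma contDiff_Fobj (d n : ℕ) (X : Fin n → Fin d → ℝ) (y : Fin n → ℝ) {σ : ℝ} (hσ : σ ≠ 0)
    (τ : ℝ) {k : WithTop ℕ∞} : ContDiff ℝ k (Fobj d n X y σ τ) := by
  have hcgf := fun i ↦ contDiff_cgf_logisticGaussMeasure hσ (y i * nrmX (X i)) (k := k)
  rw [Fobj_eq_sum_cgf]
  simp only [dotProduct, mulVec]
  fun_prop

lemma hasLineDerivAt_Fobj (d n : ℕ) (X : Fin n → Fin d → ℝ) (y : Fin n → ℝ) {σ : ℝ}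
    (hσ : σ ≠ 0) (τ : ℝ) (θ v : Fin d → ℝ) :
    HasLineDerivAt ℝ (Fobj d n X y σ τ)
      (((OmegaMat d n X σ τ)⁻¹ *ᵥ θ
        - (n : ℝ)⁻¹ • ∑ i, ∫ z, pdens d (X i) σ (y i) θ z • sStat (X i) σ z) ⬝ᵥ v) θ v := by
  have hcgf := fun i ↦ (hasDerivAt_cgf_logisticGaussMeasure hσ (y i * nrmX (X i))
    (sStat (X i) σ 1 ⬝ᵥ θ)).hasLineDerivAt_comp_dotProduct v
  have hquad := hasLineDerivAt_dotProduct_mulVec_self (isSymm_OmegaMat d n X σ τ).inv θ v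
  rw [Fobj_eq_sum_cgf]
  unfold HasLineDerivAt at hcgf hquad ⊢
  convert ((HasDerivAt.fun_sum fun i _ ↦ hcgf i).const_mul (-(n : ℝ)⁻¹)).fun_add
    (hquad.const_mul (1 / 2)) using 1
  simp only [sub_dotProduct, smul_dotProduct, sum_dotProduct, integral_pdens_smul_sStat _ hσ,
    smul_eq_mul]
  ring

theorem W_contDiff_and_grad_general
    (d n : ℕ) (X : Fin n → Fin d → ℝ)
    (y : Fin n → ℝ)
    (σ τ : ℝ) (hσ : 0 < σ) :
    ContDiff ℝ 1 (fun s : Fin d → ℝ => Fobj d n X y σ τ ((OmegaMat d n X σ τ).mulVec s)) ∧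
      ∀ s v : Fin d → ℝ,
        fderiv ℝ (fun s : Fin d → ℝ => Fobj d n X y σ τ ((OmegaMat d n X σ τ).mulVec s)) s v
          = (-(OmegaMat d n X σ τ).mulVec (hEM d n X y σ τ s)) ⬝ᵥ v := by
  set Ω := OmegaMat d n X σ τ
  have hW : ContDiff ℝ 1 fun s ↦ Fobj d n X y σ τ (Ω *ᵥ s) :=
    (contDiff_Fobj d n X y hσ.ne' τ).comp (LinearMap.toContinuousLinearMap Ω.mulVecLin).contDiff
  refine ⟨hW, fun s v ↦ ?_⟩
  have hΩsymm : Ωᵀ = Ω := (isSymm_OmegaMat d n X σ τ).eq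
  have hΩinv : Ω * Ω⁻¹ * Ω = Ω := Matrix.inv_mul_inv_inv_mul_inv _
  have hline : HasLineDerivAt ℝ (fun s ↦ Fobj d n X y σ τ (Ω *ᵥ s))
      ((Ω⁻¹ *ᵥ (Ω *ᵥ s) - (n : ℝ)⁻¹ • ∑ i, ∫ z, pdens d (X i) σ (y i) (Ω *ᵥ s) z • sStat (X i) σ z)
        ⬝ᵥ Ω *ᵥ v) s v := by
    simpa only [HasLineDerivAt, mulVec_add, mulVec_smul] using
      hasLineDerivAt_Fobj d n X y hσ.ne' τ (Ω *ᵥ s) (Ω *ᵥ v)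
  rw [← (hW.differentiable one_ne_zero s).lineDeriv_eq_fderiv, hline.lineDeriv, dotProduct_mulVec,
    ← mulVec_transpose, hΩsymm, mulVec_sub, mulVec_mulVec, mulVec_mulVec, hΩinv, hEM, mulVec_sub,
    neg_sub]

/-- In the logistic regression model, `W(s) := F(Ωs)` is continuously
differentiable on `ℝ^d` and `∇W(s) = −Ω h(s)` for every `s`, i.e. the differential of `W`
at `s` is `v ↦ ⟨−Ω h(s), v⟩`. -/
theorem W_contDiff_and_grad
    (d n : ℕ) (hn : 0 < n) (X : Fin n → Fin d → ℝ) (hX : ∀ i, X i ≠ 0)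
    (y : Fin n → ℝ) (hy : ∀ i, y i = 1 ∨ y i = -1)
    (σ τ : ℝ) (hσ : 0 < σ) (hτ : 0 < τ) :
    ContDiff ℝ 1 (fun s : Fin d → ℝ => Fobj d n X y σ τ ((OmegaMat d n X σ τ).mulVec s)) ∧
      ∀ s v : Fin d → ℝ,
        fderiv ℝ (fun s : Fin d → ℝ => Fobj d n X y σ τ ((OmegaMat d n X σ τ).mulVec s)) s v
          = (-(OmegaMat d n X σ τ).mulVec (hEM d n X y σ τ s)) ⬝ᵥ v :=
  W_contDiff_and_grad_general d n X y σ τ hσ
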